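/- arXiv:1902.07644 — 3 statements merged into one kernel-verified Lean document; each statement's English description precedes it below -/
import Mathlib

section
/- Area-level multi-input LQR lower bound: Let n ≥ 1, let q > 0, let R be an n×n real symmetric positive definite matrix, and set s = 𝟙ᵀ R⁻¹ 𝟙 where 𝟙 ∈ ℝⁿ is the all-ones vector. Let z : ℝ → ℝ be differentiable on [0, ∞) and u : ℝ → ℝⁿ be continuous with z'(t) = 𝟙ᵀ u(t) for all t ≥ 0, z(t) → 0 as t → ∞, and t ↦ q z(t)² + u(t)ᵀ R u(t) integrable on [0, ∞). Then ∫₀^∞ (q z(t)² + u(t)ᵀ R u(t)) dt ≥ √(q / s) · z(0)². -/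
/-!
Write `k = √(q / s)` and `V = k z²`. Cauchy–Schwarz for the inner product `⟨x, y⟩ = xᵀ R y`
gives `(𝟙ᵀ u)² ≤ s · uᵀ R u`, and with it AM–GM bounds the dissipation `-V' = -2 k z (𝟙ᵀ u)`
by the running cost `q z² + uᵀ R u`. Integrating over `[0, T]` and letting `T → ∞`, where
`V → 0`, bounds the total cost below by `V 0 = √(q / s) z(0)²`.
-/

open Set Filter MeasureTheory Matrix

theorem Matrix.PosDef.sq_dotProduct_le {n : Type*} [Fintype n] [DecidableEq n]
    {R : Matrix n n ℝ} (hR : R.PosDef) (a w : n → ℝ) :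
    (a ⬝ᵥ w) ^ 2 ≤ (a ⬝ᵥ R⁻¹ *ᵥ a) * (w ⬝ᵥ R *ᵥ w) := by
  let := R.toSeminormedAddCommGroup hR.posSemidef
  let := R.toInnerProductSpace hR.posSemidef
  have hRa : R *ᵥ (R⁻¹ *ᵥ a) = a := by
    rw [mulVec_mulVec, mul_nonsing_inv R ((isUnit_iff_isUnit_det R).1 hR.isUnit), one_mulVec]
  have key := real_inner_mul_inner_self_le w (R⁻¹ *ᵥ a)
  -- `R.toInnerProductSpace` unfolds to `⟪x, y⟫ = (R *ᵥ y) ⬝ᵥ star x`.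
  change ((R *ᵥ (R⁻¹ *ᵥ a)) ⬝ᵥ star w) * ((R *ᵥ (R⁻¹ *ᵥ a)) ⬝ᵥ star w) ≤
    ((R *ᵥ w) ⬝ᵥ star w) * ((R *ᵥ (R⁻¹ *ᵥ a)) ⬝ᵥ star (R⁻¹ *ᵥ a)) at key
  simp only [hRa, star_trivial] at key
  rw [dotProduct_comm w, sq, mul_comm (a ⬝ᵥ R⁻¹ *ᵥ a)]
  exact key

-- No sign condition on `s`: for `s ≤ 0` the square root is the junk value `0`.
theorem sq_sqrt_div_mul_le {q : ℝ} (hq : 0 ≤ q) (s : ℝ) : √(q / s) ^ 2 * s ≤ q := by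
  rcases lt_trichotomy s 0 with hs | rfl | hs
  · rw [Real.sqrt_eq_zero'.2 (div_nonpos_of_nonneg_of_nonpos hq hs.le)]
    simpa
  · simpa
  · rw [Real.sq_sqrt (by positivity), div_mul_cancel₀ _ hs.ne']

theorem neg_two_mul_mul_mul_le_of_sq_le_mul {k s q x y p : ℝ} (hk : k ^ 2 * s ≤ q)
    (hy : y ^ 2 ≤ s * p) (hq : 0 ≤ q) (hp : 0 ≤ p) :
    -(2 * k * x * y) ≤ q * x ^ 2 + p := by
  have hsq : (2 * k * x * y) ^ 2 ≤ (q * x ^ 2 + p) ^ 2 := by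
    nlinarith [mul_le_mul_of_nonneg_left hy (sq_nonneg (k * x)),
      mul_le_mul_of_nonneg_right hk (mul_nonneg (sq_nonneg x) hp), sq_nonneg (q * x ^ 2 - p)]
  exact neg_le.mp (abs_le_of_sq_le_sq' hsq (by positivity)).1

theorem sub_le_integral_Ici_of_hasDerivWithinAt_of_tendsto {V V' f : ℝ → ℝ} {a L : ℝ}
    (hV : ∀ t ∈ Ici a, HasDerivWithinAt V (V' t) (Ici a) t)
    (hVL : Tendsto V atTop (nhds L)) (hf : IntegrableOn f (Ici a))
    (hle : ∀ t ∈ Ioi a, -V' t ≤ f t) :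
    V a - L ≤ ∫ t in Ici a, f t := by
  have hbound (T : ℝ) (hT : a ≤ T) : V a - V T ≤ ∫ t in a..T, f t := by
    have := intervalIntegral.sub_le_integral_of_hasDeriv_right_of_le (g := fun t => -V t) hT
      (fun t ht => (hV t ht.1).continuousWithinAt.mono Icc_subset_Ici_self |>.neg)
      (fun t ht => ((hV t ht.1.le).mono fun r hr => ht.1.le.trans (le_of_lt hr)).neg)
      (hf.mono_set Icc_subset_Ici_self) (fun t ht => hle t ht.1)
    simpa [sub_eq_neg_add, add_comm] using this
  rw [integral_Ici_eq_integral_Ioi]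
  refine le_of_tendsto_of_tendsto (tendsto_const_nhds.sub hVL)
    (intervalIntegral_tendsto_integral_Ioi a (hf.mono_set Ioi_subset_Ici_self) tendsto_id) ?_
  filter_upwards [eventually_ge_atTop a] with T hT using hbound T hT

theorem area_LQR_lower_bound_general
    (n : ℕ)
    (q : ℝ) (hq : 0 < q)
    (R : Matrix (Fin n) (Fin n) ℝ) (hR : R.PosDef)
    (s : ℝ) (hs : s = (fun _ => (1:ℝ)) ⬝ᵥ R⁻¹.mulVec (fun _ => (1:ℝ)))
    (z : ℝ → ℝ) (u : ℝ → Fin n → ℝ)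
    (hz : ∀ t ∈ Ici (0:ℝ), HasDerivWithinAt z ((fun _ => (1:ℝ)) ⬝ᵥ u t) (Ici 0) t)
    (hz0 : Tendsto z atTop (nhds 0))
    (hint : IntegrableOn (fun t => q * (z t) ^ 2 + u t ⬝ᵥ R.mulVec (u t)) (Ici 0)) :
    Real.sqrt (q / s) * (z 0) ^ 2 ≤
      ∫ t in Ici (0:ℝ), (q * (z t) ^ 2 + u t ⬝ᵥ R.mulVec (u t)) := by
  set k := √(q / s)
  have hV (t : ℝ) (ht : t ∈ Ici 0) : HasDerivWithinAt (fun t => k * z t ^ 2)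
      (k * (2 * z t * ((fun _ => 1) ⬝ᵥ u t))) (Ici 0) t :=
    (((hz t ht).fun_pow 2).const_mul k).congr_deriv (by norm_num)
  have hdissipation (t : ℝ) : -(k * (2 * z t * ((fun _ => 1) ⬝ᵥ u t))) ≤
      q * z t ^ 2 + u t ⬝ᵥ R *ᵥ u t := by
    have hCS := hs ▸ hR.sq_dotProduct_le (fun _ => 1) (u t)
    have hp : 0 ≤ u t ⬝ᵥ R *ᵥ u t := by
      simpa using hR.posSemidef.dotProduct_mulVec_nonneg (u t)
    convert neg_two_mul_mul_mul_le_of_sq_le_mul (sq_sqrt_div_mul_le hq.le s) hCS hq.le hp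
      using 2
    ring
  have hV0 : Tendsto (fun t => k * z t ^ 2) atTop (nhds 0) := by
    simpa using (hz0.pow 2).const_mul k
  simpa using sub_le_integral_Ici_of_hasDerivWithinAt_of_tendsto hV hV0 hint
    (fun t _ => hdissipation t)

/-- Area-level multi-input LQR lower bound: with `z' = 𝟙ᵀ u`, `z → 0`,
`R` symmetric positive definite, `s = 𝟙ᵀ R⁻¹ 𝟙`, and the running cost
`q z² + uᵀ R u` integrable on `[0, ∞)`, the total cost is at least
`√(q / s) z(0)²`. -/
theorem area_LQR_lower_bound
    (n : ℕ) (hn : 1 ≤ n)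
    (q : ℝ) (hq : 0 < q)
    (R : Matrix (Fin n) (Fin n) ℝ) (hR : R.PosDef) (hRsymm : R.IsSymm)
    (s : ℝ) (hs : s = (fun _ => (1:ℝ)) ⬝ᵥ R⁻¹.mulVec (fun _ => (1:ℝ)))
    (z : ℝ → ℝ) (u : ℝ → Fin n → ℝ) (hu : Continuous u)
    (hz : ∀ t ∈ Ici (0:ℝ), HasDerivWithinAt z ((fun _ => (1:ℝ)) ⬝ᵥ u t) (Ici 0) t)
    (hz0 : Tendsto z atTop (nhds 0))
    (hint : IntegrableOn (fun t => q * (z t) ^ 2 + u t ⬝ᵥ R.mulVec (u t)) (Ici 0)) :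
    Real.sqrt (q / s) * (z 0) ^ 2 ≤
      ∫ t in Ici (0:ℝ), (q * (z t) ^ 2 + u t ⬝ᵥ R.mulVec (u t)) :=
  area_LQR_lower_bound_general n q hq R hR s hs z u hz hz0 hint
end

section
/- Area-level multi-input LQR achievability: Let n ≥ 1, q > 0, R an n×n real symmetric positive definite matrix, s = 𝟙ᵀ R⁻¹ 𝟙 > 0 with 𝟙 the all-ones vector, and z₀ ∈ ℝ. Define z(t) = z₀ e^{-√(q s) t} and u(t) = -√(q/s) · z(t) · R⁻¹ 𝟙 for t ≥ 0. Then z'(t) = 𝟙ᵀ u(t) for all t ≥ 0, z(0) = z₀, z(t) → 0 as t → ∞, and ∫₀^∞ (q z(t)² + u(t)ᵀ R u(t)) dt = √(q / s) · z₀². -/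
open Set Filter MeasureTheory Matrix

/-!
Write `w = R⁻¹ 𝟙`, `c = √(q s)` and `k = √(q / s)`, so that `k s = c` and `c k = q`.
Then `𝟙ᵀ u = -k s z = -c z`, which is exactly the derivative of `z₀ e^{-c t}`,
and `uᵀ R u = k² z² (wᵀ R w) = k² s z² = q z²`. Hence the running cost is
`2 q z₀² e^{-2 c t}`, whose integral over `[0, ∞)` is `q z₀² / c = k z₀²`.
-/

theorem Matrix.nonsing_inv_mulVec_dotProduct_mulVec {m α : Type*} [Fintype m]
    [DecidableEq m] [CommRing α] (A : Matrix m m α) (v : m → α) :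
    A⁻¹ *ᵥ v ⬝ᵥ A *ᵥ (A⁻¹ *ᵥ v) = v ⬝ᵥ A⁻¹ *ᵥ v := by
  by_cases h : IsUnit A.det
  · rw [mulVec_mulVec, mul_nonsing_inv A h, one_mulVec, dotProduct_comm]
  · -- the junk value `A⁻¹ = 0` makes both sides vanish
    simp [nonsing_inv_apply_not_isUnit A h]

theorem Real.sqrt_div_mul_self (q : ℝ) {s : ℝ} (hs : 0 ≤ s) :
    √(q / s) * s = √(q * s) := by
  rcases hs.eq_or_lt with rfl | hs
  · simp
  · rw [show q * s = q / s * (s * s) by field_simp, Real.sqrt_mul' _ (mul_self_nonneg s),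
      Real.sqrt_mul_self hs.le]

theorem Real.div_sqrt_mul {q : ℝ} (hq : 0 ≤ q) (s : ℝ) : q / √(q * s) = √(q / s) := by
  rw [Real.sqrt_mul hq, Real.sqrt_div hq, ← div_div, Real.div_sqrt]

theorem area_LQR_achievability_general
    (n : ℕ)
    (q : ℝ) (hq : 0 < q)
    (R : Matrix (Fin n) (Fin n) ℝ)
    (s : ℝ) (hs : s = (fun _ => (1:ℝ)) ⬝ᵥ R⁻¹.mulVec (fun _ => (1:ℝ))) (hspos : 0 < s)
    (z₀ : ℝ)
    (z : ℝ → ℝ) (hzdef : ∀ t : ℝ, z t = z₀ * Real.exp (-Real.sqrt (q * s) * t))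
    (u : ℝ → Fin n → ℝ)
    (hudef : ∀ t : ℝ, u t = (-Real.sqrt (q / s) * z t) • R⁻¹.mulVec (fun _ => (1:ℝ))) :
    (∀ t ≥ (0:ℝ), HasDerivAt z ((fun _ => (1:ℝ)) ⬝ᵥ u t) t) ∧
    z 0 = z₀ ∧
    Tendsto z atTop (nhds 0) ∧
    ∫ t in Ici (0:ℝ), (q * (z t) ^ 2 + u t ⬝ᵥ R.mulVec (u t)) =
      Real.sqrt (q / s) * z₀ ^ 2 := by
  set c := √(q * s)
  have hc : 0 < c := Real.sqrt_pos.2 (mul_pos hq hspos)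
  have hz : z = fun t => z₀ * Real.exp (-c * t) := funext hzdef
  have hflow (t : ℝ) : (fun _ => (1:ℝ)) ⬝ᵥ u t = -c * z t := by
    have hks : √(q / s) * s = c := Real.sqrt_div_mul_self q hspos.le
    rw [hudef, dotProduct_smul, ← hs, smul_eq_mul, ← hks]
    ring
  have hquad (t : ℝ) : u t ⬝ᵥ R *ᵥ u t = q * z t ^ 2 := by
    have hk : √(q / s) ^ 2 * s = q := by
      rw [Real.sq_sqrt (div_pos hq hspos).le, div_mul_cancel₀ q hspos.ne']
    rw [hudef, mulVec_smul, dotProduct_smul, smul_dotProduct,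
      nonsing_inv_mulVec_dotProduct_mulVec, ← hs, smul_eq_mul, smul_eq_mul]
    linear_combination z t ^ 2 * hk
  have hcost (t : ℝ) :
      q * z t ^ 2 + u t ⬝ᵥ R *ᵥ u t = 2 * q * z₀ ^ 2 * Real.exp (-(2 * c) * t) := by
    rw [hquad, hzdef, show -(2 * c) * t = -c * t + -c * t by ring, Real.exp_add]
    ring
  refine ⟨fun t _ => ?_, by simp [hzdef], ?_, ?_⟩
  · rw [hflow, hz]
    simpa [mul_comm, mul_left_comm] using ((hasDerivAt_id t).const_mul (-c)).exp.const_mul z₀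
  · rw [hz]
    simpa using tendsto_const_nhds (x := z₀).mul
      (Real.tendsto_exp_comp_nhds_zero.2 (tendsto_id.const_mul_atTop_of_neg (neg_neg_of_pos hc)))
  · rw [integral_Ici_eq_integral_Ioi]
    simp_rw [hcost]
    have hqc : q / c = √(q / s) := Real.div_sqrt_mul hq.le s
    rw [integral_const_mul, integral_exp_mul_Ioi (by linarith) 0, ← hqc, mul_zero, Real.exp_zero]
    field_simp

/-- Area-level multi-input LQR achievability: with `s = 𝟙ᵀ R⁻¹ 𝟙 > 0`,
`z t = z₀ e^{-√(q s) t}` and `u t = -√(q/s) z t • R⁻¹ 𝟙`, one has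
`z' = 𝟙ᵀ u`, `z 0 = z₀`, `z → 0`, and total cost exactly `√(q / s) z₀²`. -/
theorem area_LQR_achievability
    (n : ℕ) (hn : 1 ≤ n)
    (q : ℝ) (hq : 0 < q)
    (R : Matrix (Fin n) (Fin n) ℝ) (hR : R.PosDef) (hRsymm : R.IsSymm)
    (s : ℝ) (hs : s = (fun _ => (1:ℝ)) ⬝ᵥ R⁻¹.mulVec (fun _ => (1:ℝ))) (hspos : 0 < s)
    (z₀ : ℝ)
    (z : ℝ → ℝ) (hzdef : ∀ t : ℝ, z t = z₀ * Real.exp (-Real.sqrt (q * s) * t))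
    (u : ℝ → Fin n → ℝ)
    (hudef : ∀ t : ℝ, u t = (-Real.sqrt (q / s) * z t) • R⁻¹.mulVec (fun _ => (1:ℝ))) :
    (∀ t ≥ (0:ℝ), HasDerivAt z ((fun _ => (1:ℝ)) ⬝ᵥ u t) t) ∧
    z 0 = z₀ ∧
    Tendsto z atTop (nhds 0) ∧
    ∫ t in Ici (0:ℝ), (q * (z t) ^ 2 + u t ⬝ᵥ R.mulVec (u t)) =
      Real.sqrt (q / s) * z₀ ^ 2 :=
  area_LQR_achievability_general n q hq R s hs hspos z₀ z hzdef u hudef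
end

section
/- Existence and uniqueness of the algebraic Riccati solution for the integrator LQR: Let n ≥ 1 and let Q and R be n×n real symmetric positive definite matrices. Then there exists a unique n×n real symmetric positive definite matrix P satisfying P R⁻¹ P = Q. -/
/-!
Writing `T` for the positive definite square root of `S = R⁻¹`, the congruence `P ↦ T * P * T`
preserves positive definiteness and turns `P * S * P = Q` into `X * X = T * Q * T` for
`X = T * P * T`; the latter has exactly one positive definite solution, the square root.
-/

open Matrix
open scoped MatrixOrder ComplexOrder

namespace Matrix

variable {n 𝕜 : Type*} [Fintype n] [DecidableEq n] [RCLike 𝕜]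

theorem existsUnique_posDef_mul_self_eq {A : Matrix n n 𝕜} (hA : A.PosDef) :
    ∃! B : Matrix n n 𝕜, B.PosDef ∧ B * B = A :=
  ⟨CFC.sqrt A, ⟨(IsStrictlyPositive.sqrt A hA.isStrictlyPositive).posDef,
      CFC.sqrt_mul_sqrt_self A hA.posSemidef.nonneg⟩,
    fun _ ⟨hB, hBB⟩ ↦ (CFC.sqrt_unique hBB hB.posSemidef.nonneg).symm⟩

theorem existsUnique_posDef_mul_mul_eq {S Q : Matrix n n 𝕜} (hS : S.PosDef) (hQ : Q.PosDef) :
    ∃! P : Matrix n n 𝕜, P.PosDef ∧ P * S * P = Q := by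
  obtain ⟨T, ⟨hT, rfl⟩, -⟩ := existsUnique_posDef_mul_self_eq hS
  lift T to (Matrix n n 𝕜)ˣ using hT.isUnit
  have hTstar : star (T : Matrix n n 𝕜) = T := hT.isHermitian
  let conj : Equiv.Perm (Matrix n n 𝕜) := (Units.mulLeft T).trans (Units.mulRight T)
  have conj_apply (X) : conj X = T * X * T := rfl
  have conj_posDef_iff (X : Matrix n n 𝕜) : (conj X).PosDef ↔ X.PosDef := by
    rw [conj_apply]
    nth_rw 1 [← hTstar]
    exact T.isUnit.posDef_star_left_conjugate_iff
  refine (conj.existsUnique_congr fun P ↦ ?_).mpr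
    (existsUnique_posDef_mul_self_eq ((conj_posDef_iff Q).mpr hQ))
  have conj_mul_self : conj P * conj P = conj (P * (T * T) * P) := by
    simp only [conj_apply, Matrix.mul_assoc]
  rw [conj_posDef_iff, conj_mul_self, conj.injective.eq_iff]

end Matrix

theorem riccati_integrator_exists_unique_general
    (n : ℕ)
    (Q R : Matrix (Fin n) (Fin n) ℝ)
    (hQ : Q.PosDef)
    (hR : R.PosDef) :
    ∃! P : Matrix (Fin n) (Fin n) ℝ,
      P.PosDef ∧ P.IsSymm ∧ P * R⁻¹ * P = Q := by
  obtain ⟨P, ⟨hP, hPQ⟩, huniq⟩ := existsUnique_posDef_mul_mul_eq hR.inv hQ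
  exact ⟨P, ⟨hP, isHermitian_iff_isSymm.mp hP.isHermitian, hPQ⟩,
    fun P' ⟨hP', _, hP'Q⟩ ↦ huniq P' ⟨hP', hP'Q⟩⟩

/-- Existence and uniqueness of the algebraic Riccati solution for the
integrator LQR: for `Q`, `R` real symmetric positive definite `n × n`
matrices, there is a unique symmetric positive definite `P` with
`P R⁻¹ P = Q`. -/
theorem riccati_integrator_exists_unique
    (n : ℕ) (hn : 1 ≤ n)
    (Q R : Matrix (Fin n) (Fin n) ℝ)
    (hQ : Q.PosDef) (hQsymm : Q.IsSymm)
    (hR : R.PosDef) (hRsymm : R.IsSymm) :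
    ∃! P : Matrix (Fin n) (Fin n) ℝ,
      P.PosDef ∧ P.IsSymm ∧ P * R⁻¹ * P = Q :=
  riccati_integrator_exists_unique_general n Q R hQ hR
end
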